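/- Let K be a field, x_1,...,x_n ∈ K^* pairwise distinct, a_1,...,a_n positive integers whose images in K satisfy a_i ∏_{j≠i}(x_j - x_i) = N ∏_{j≠i} x_j for all i, where N = a_1+...+a_n (in K). Set β(X) = ∏_{i=1}^n (1 - x_i X)^{a_i}. Then β'(X) = (-1)^n x_1···x_n · N · X^{n-1} ∏_{i=1}^n (1 - x_i X)^{a_i - 1} in K[X]. -/
import Mathlib

open Finset Polynomial

private lemma derivative_finset_prod' {K : Type*} [CommRing K] {ι : Type*} [DecidableEq ι]
    (s : Finset ι) (f : ι → K[X]) :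
    derivative (∏ i ∈ s, f i) = ∑ i ∈ s, (∏ j ∈ s.erase i, f j) * derivative (f i) := by
  induction s using Finset.induction_on with
  | empty => simp
  | @insert a s ha ih =>
    rw [Finset.prod_insert ha, derivative_mul, ih, Finset.sum_insert ha, Finset.erase_insert ha]
    rw [Finset.mul_sum, add_comm, mul_comm (derivative (f a))]
    have key : ∀ i ∈ s, f a * ((∏ j ∈ s.erase i, f j) * derivative (f i)) =
        (∏ j ∈ (insert a s).erase i, f j) * derivative (f i) := fun i hi => by
      rw [Finset.erase_insert_of_ne (by rintro rfl; exact ha hi), Finset.prod_insert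
        (fun hm => ha (Finset.mem_of_mem_erase hm))]
      ring
    rw [Finset.sum_congr rfl key]
    exact add_comm _ _

/-- Under the fundamental relations `aᵢ ∏_{j≠i}(xⱼ - xᵢ) = N ∏_{j≠i} xⱼ` (with
`N = a₁+⋯+aₙ` in `K`), the derivative of `β(X) = ∏ᵢ (1 - xᵢ X)^{aᵢ}` is
`(-1)^n x₁⋯xₙ · N · X^{n-1} ∏ᵢ (1 - xᵢ X)^{aᵢ - 1}`. -/
theorem stmt6 {K : Type*} [Field K] (n : ℕ)
    (x : Fin n → K) (hx : ∀ i, x i ≠ 0) (hx' : Function.Injective x)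
    (a : Fin n → ℕ) (ha : ∀ i, 0 < a i)
    (N : K) (hN : N = ∑ i, (a i : K))
    (h : ∀ i, (a i : K) * ∏ j ∈ univ.erase i, (x j - x i) =
      N * ∏ j ∈ univ.erase i, x j) :
    derivative (∏ i, (1 - C (x i) * X) ^ a i) =
      C ((-1) ^ n * (∏ i, x i) * N) * X ^ (n - 1) *
        ∏ i, (1 - C (x i) * X) ^ (a i - 1) := by
  rcases Nat.eq_zero_or_pos n with hn | hn
  · subst hn
    simp only [Finset.univ_eq_empty, Finset.prod_empty, Finset.sum_empty] at hN ⊢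
    simp [hN]
  set P : K[X] := ∑ i, C (-(a i : K) * x i) * ∏ j ∈ univ.erase i, (1 - C (x j) * X) with hP
  set Q : K[X] := C ((-1) ^ n * (∏ i, x i) * N) * X ^ (n - 1) with hQ
  have hcard : ∀ i : Fin n, (univ.erase i).card = n - 1 := fun i => by
    simp [Finset.card_erase_of_mem]
  have key : P = Q := by
    have hdeg : (P - Q).natDegree < n := by
      have h1 : P.natDegree ≤ n - 1 := by
        apply natDegree_sum_le_of_forall_le
        intro i _
        refine natDegree_mul_le.trans ?_
        simp only [natDegree_C, zero_add]
        refine (natDegree_prod_le _ _).trans ?_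
        have hb : ∀ j ∈ univ.erase i, (1 - C (x j) * X).natDegree ≤ 1 := fun j _ =>
          (natDegree_sub_le _ _).trans (max_le (by simp)
            ((natDegree_C_mul_le _ _).trans (by simp)))
        calc ∑ j ∈ univ.erase i, (1 - C (x j) * X).natDegree
            ≤ ∑ _j ∈ univ.erase i, 1 := by exact Finset.sum_le_sum hb
          _ = n - 1 := by simp [hcard i]
      have h2 : Q.natDegree ≤ n - 1 :=
        natDegree_mul_le.trans (by rw [natDegree_C, natDegree_X_pow, zero_add])
      calc (P - Q).natDegree ≤ max P.natDegree Q.natDegree := natDegree_sub_le _ _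
        _ ≤ n - 1 := max_le h1 h2
        _ < n := Nat.sub_lt hn one_pos
    have hinj : Function.Injective (fun i : Fin n => (x i)⁻¹) := fun i j hij =>
      hx' (inv_injective hij)
    have heval : ∀ i, (P - Q).eval ((x i)⁻¹) = 0 := by
      intro i
      rw [eval_sub, sub_eq_zero]
      have hPe : P.eval ((x i)⁻¹) =
          (-(a i : K) * x i) * ∏ j ∈ univ.erase i, (1 - x j * (x i)⁻¹) := by
        rw [hP, eval_finset_sum]
        rw [Finset.sum_eq_single i]
        · rw [eval_mul, eval_C, eval_prod]
          congr 1
          exact Finset.prod_congr rfl fun j _ => by simp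
        · intro k _ hk
          have h0 : (1 - C (x i) * X).eval ((x i)⁻¹) = 0 := by
            simp [hx i]
          rw [eval_mul, eval_prod, Finset.prod_eq_zero (Finset.mem_erase.2 ⟨Ne.symm hk,
            Finset.mem_univ i⟩) h0, mul_zero]
        · simp
      have hprod : ∏ j ∈ univ.erase i, (1 - x j * (x i)⁻¹) =
          (∏ j ∈ univ.erase i, (x i - x j)) * ((x i)⁻¹) ^ (n - 1) := by
        rw [← hcard i, ← Finset.prod_const, ← Finset.prod_mul_distrib]
        refine Finset.prod_congr rfl fun j _ => ?_
        rw [sub_mul, mul_inv_cancel₀ (hx i)]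
      have hsign : ∏ j ∈ univ.erase i, (x i - x j) =
          (-1 : K) ^ (n - 1) * ∏ j ∈ univ.erase i, (x j - x i) := by
        rw [← hcard i, ← Finset.prod_const, ← Finset.prod_mul_distrib]
        exact Finset.prod_congr rfl fun j _ => by ring
      have hx_all : (∏ j, x j) = x i * ∏ j ∈ univ.erase i, x j :=
        (Finset.mul_prod_erase _ _ (Finset.mem_univ i)).symm
      have hsgn : ((-1 : K)) ^ n = (-1) ^ (n - 1) * (-1) := by
        rw [← pow_succ, Nat.sub_add_cancel hn]
      rw [hPe, hprod, hsign, hQ]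
      simp only [eval_mul, eval_C, eval_pow, eval_X]
      rw [hx_all, hsgn]
      linear_combination ((-1 : K) ^ (n - 1) * (-1) * x i * ((x i)⁻¹) ^ (n - 1)) * (h i)
    have := eq_zero_of_natDegree_lt_card_of_eval_eq_zero (P - Q) hinj heval
      (by simpa using hdeg)
    exact sub_eq_zero.1 this
  have hderiv : derivative (∏ i, (1 - C (x i) * X) ^ a i) =
      (∏ i, (1 - C (x i) * X) ^ (a i - 1)) * P := by
    rw [derivative_finset_prod']
    rw [hP, Finset.mul_sum]
    refine Finset.sum_congr rfl fun i _ => ?_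
    have hd1 : derivative ((1 - C (x i) * X) ^ a i) =
        C ((a i : K)) * (1 - C (x i) * X) ^ (a i - 1) * (-C (x i)) := by
      rw [derivative_pow]
      congr 1
      simp
    rw [hd1]
    have hsplit : ∀ j, (1 - C (x j) * X) ^ a j =
        (1 - C (x j) * X) ^ (a j - 1) * (1 - C (x j) * X) := fun j => by
      conv_lhs => rw [← Nat.sub_add_cancel (ha j)]
      rw [pow_succ]
    calc (∏ j ∈ univ.erase i, (1 - C (x j) * X) ^ a j) *
          (C ((a i : K)) * (1 - C (x i) * X) ^ (a i - 1) * (-C (x i)))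
        = ((1 - C (x i) * X) ^ (a i - 1) * ∏ j ∈ univ.erase i, (1 - C (x j) * X) ^ (a j - 1)) *
          (C (-(a i : K) * x i) * ∏ j ∈ univ.erase i, (1 - C (x j) * X)) := by
          rw [Finset.prod_congr rfl fun j _ => hsplit j, Finset.prod_mul_distrib]
          simp only [map_mul, map_neg, C_mul]
          ring
        _ = (∏ j, (1 - C (x j) * X) ^ (a j - 1)) *
          (C (-(a i : K) * x i) * ∏ j ∈ univ.erase i, (1 - C (x j) * X)) := by
          conv_rhs => rw [← Finset.mul_prod_erase _ _ (Finset.mem_univ i)]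
  rw [hderiv, key, hQ]
  ring
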